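/- If B is a quasi-greedy basis with quasi-greedy constant K in a Banach space X, then the function μ(N) = sup_{1≤k≤N} h_r(k)/h_l(k) is doubling: μ(2N) ≤ 2K²·μ(N) for all N ≥ 1. -/

import Mathlib

/-!
Quasi-greediness gives `‖∑_{Γ'} e_k‖ ≤ K ‖∑_Γ e_k‖` for `Γ' ⊆ Γ`, because a greedy ordering of
`∑_Γ e_k` may list `Γ'` first; hence `h_l(a) ≤ K h_l(k)` for `a ≤ k`. A size `N < k ≤ 2N` splits as
`a + b` with `1 ≤ a, b ≤ N`, so subadditivity of `h_r` gives
`h_r(k) ≤ μ(N) (h_l(a) + h_l(b)) ≤ 2K μ(N) h_l(k)`. Thus `μ(2N) ≤ 2K μ(N) ≤ 2K² μ(N)` as `K ≥ 1`.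
-/

open Finset Filter

/-- A (seminormalized Schauder) basis of a real normed space, given by the basis
vectors `e k` together with the coefficient functionals `coeff k`. -/
structure QGBasis (X : Type*) [NormedAddCommGroup X] [NormedSpace ℝ X] where
  e : ℕ → X
  coeff : ℕ → X → ℝ
  coeff_add : ∀ k x y, coeff k (x + y) = coeff k x + coeff k y
  coeff_smul : ∀ (k : ℕ) (c : ℝ) (x : X), coeff k (c • x) = c * coeff k x
  coeff_e : ∀ j k, coeff j (e k) = if j = k then 1 else 0
  expansion : ∀ x : X,
    Tendsto (fun N => ∑ k ∈ Finset.range N, coeff k x • e k) atTop (nhds x)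
  c_norm : ℝ
  C_norm : ℝ
  c_norm_pos : 0 < c_norm
  norm_e_ge : ∀ k, c_norm ≤ ‖e k‖
  norm_e_le : ∀ k, ‖e k‖ ≤ C_norm

namespace QGBasis

variable {X : Type*} [NormedAddCommGroup X] [NormedSpace ℝ X] (B : QGBasis X)

/-- `π` enumerates the coefficients of `x` in decreasing order of modulus;
position `k` (zero-based) carries the `(k+1)`-st largest coefficient. -/
def IsGreedyPerm (x : X) (π : ℕ → ℕ) : Prop :=
  Function.Bijective π ∧ ∀ k, |B.coeff (π (k + 1)) x| ≤ |B.coeff (π k) x|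

/-- The thresholding greedy approximation of order `N` associated to the
greedy enumeration `π`. -/
def G (π : ℕ → ℕ) (N : ℕ) (x : X) : X :=
  ∑ k ∈ Finset.range N, B.coeff (π k) x • B.e (π k)

/-- `B` is quasi-greedy with constant `K`. -/
def QuasiGreedyWith (K : ℝ) : Prop :=
  ∀ (x : X) (π : ℕ → ℕ), B.IsGreedyPerm x π → ∀ N,
    ‖B.G π N x‖ ≤ K * ‖x‖ ∧ ‖x - B.G π N x‖ ≤ K * ‖x‖

/-- Coordinate projection onto the index set `Γ`. -/
def S (Γ : Finset ℕ) (x : X) : X := ∑ k ∈ Γ, B.coeff k x • B.e k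

/-- Right democracy function. -/
noncomputable def hr (N : ℕ) : ℝ :=
  sSup {r | ∃ Γ : Finset ℕ, Γ.card = N ∧ r = ‖∑ k ∈ Γ, B.e k‖}

/-- Left democracy function. -/
noncomputable def hl (N : ℕ) : ℝ :=
  sInf {r | ∃ Γ : Finset ℕ, Γ.card = N ∧ r = ‖∑ k ∈ Γ, B.e k‖}

/-- The democracy ratio `μ(N) = sup_{1 ≤ k ≤ N} h_r(k)/h_l(k)`. -/
noncomputable def mu (N : ℕ) : ℝ :=
  sSup {r | ∃ k, 1 ≤ k ∧ k ≤ N ∧ r = B.hr k / B.hl k}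

/-- Best `N`-term approximation error. -/
noncomputable def sigma (N : ℕ) (x : X) : ℝ :=
  sInf {r | ∃ (Γ : Finset ℕ) (b : ℕ → ℝ),
    Γ.card ≤ N ∧ r = ‖x - ∑ k ∈ Γ, b k • B.e k‖}

/-- `Γ` is a greedy set for `x`: every coefficient inside dominates every
coefficient outside. -/
def IsGreedySet (x : X) (Γ : Finset ℕ) : Prop :=
  ∀ j ∈ Γ, ∀ i ∉ Γ, |B.coeff i x| ≤ |B.coeff j x|

end QGBasis

theorem exists_perm_map_range_eq_of_subset {Γ' Γ : Finset ℕ} (h : Γ' ⊆ Γ) :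
    ∃ σ : Equiv.Perm ℕ,
      (range #Γ').map σ.toEmbedding = Γ' ∧ (range #Γ).map σ.toEmbedding = Γ := by
  set L := Γ'.sort (· ≤ ·) ++ (Γ \ Γ').sort (· ≤ ·)
  have hL : L.Nodup := (Γ'.sort_nodup _).append ((Γ \ Γ').sort_nodup _) <|
    List.disjoint_left.2 fun _ ha hb =>
      (Finset.mem_sdiff.1 ((mem_sort _).1 hb)).2 ((mem_sort _).1 ha)
  have hcard := card_le_card h
  have hlen : L.length = #Γ := by
    simp only [L, List.length_append, length_sort, card_sdiff_of_subset h]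
    omega
  obtain ⟨σ, hσ⟩ := Equiv.Perm.exists_extending_pair (fun i : Fin L.length => (i : ℕ)) L.get
    Fin.val_injective (List.nodup_iff_injective_get.1 hL)
  have hσL (k : ℕ) (hk : k < L.length) : σ k = L[k] := hσ ⟨k, hk⟩
  refine ⟨σ, eq_of_subset_of_card_le (fun j hj => ?_) (by simp),
    eq_of_subset_of_card_le (fun j hj => ?_) (by simp)⟩
  · obtain ⟨k, hk, rfl⟩ := mem_map.1 hj
    have hk : k < #Γ' := mem_range.1 hk
    rw [Equiv.coe_toEmbedding, hσL k (by omega), List.getElem_append_left (by simpa using hk)]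
    exact (mem_sort _).1 (List.getElem_mem _)
  · obtain ⟨k, hk, rfl⟩ := mem_map.1 hj
    rw [Equiv.coe_toEmbedding, hσL k (by simp_all)]
    rcases List.mem_append.1 (List.getElem_mem (l := L) _) with hΓ' | hrest
    · exact h ((mem_sort _).1 hΓ')
    · exact (Finset.mem_sdiff.1 ((mem_sort _).1 hrest)).1

namespace QGBasis

variable {X : Type*} [NormedAddCommGroup X] [NormedSpace ℝ X] (B : QGBasis X)

lemma coeff_sum_e (j : ℕ) (Γ : Finset ℕ) :
    B.coeff j (∑ k ∈ Γ, B.e k) = if j ∈ Γ then 1 else 0 := by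
  have h := map_sum (AddMonoidHom.mk' (B.coeff j) (B.coeff_add j)) B.e Γ
  simp only [AddMonoidHom.mk'_apply] at h
  simp only [h, B.coeff_e, sum_ite_eq]

lemma isGreedyPerm_sum_e {Γ : Finset ℕ} {σ : Equiv.Perm ℕ}
    (hσ : (range #Γ).map σ.toEmbedding = Γ) : B.IsGreedyPerm (∑ k ∈ Γ, B.e k) σ := by
  have hmem (k : ℕ) : σ k ∈ Γ ↔ k < #Γ := by
    have h := Finset.mem_map' σ.toEmbedding (a := k) (s := range #Γ)
    rwa [hσ, mem_range] at h
  have hcoeff (k : ℕ) : B.coeff (σ k) (∑ k ∈ Γ, B.e k) = if k < #Γ then 1 else 0 := by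
    simp only [coeff_sum_e, hmem]
  refine ⟨σ.bijective, fun k => ?_⟩
  rw [hcoeff, hcoeff]
  split_ifs <;> norm_num
  omega

lemma G_sum_e {Γ' Γ : Finset ℕ} (hsub : Γ' ⊆ Γ) {σ : Equiv.Perm ℕ}
    (hσ' : (range #Γ').map σ.toEmbedding = Γ') :
    B.G σ #Γ' (∑ k ∈ Γ, B.e k) = ∑ k ∈ Γ', B.e k := by
  have hcoeff : ∀ k ∈ range #Γ', B.coeff (σ k) (∑ k ∈ Γ, B.e k) = 1 := fun k hk => by
    rw [coeff_sum_e, if_pos (hsub (hσ' ▸ mem_map_of_mem σ.toEmbedding hk))]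
  conv_rhs => rw [← hσ', sum_map]
  exact sum_congr rfl fun k hk => by rw [hcoeff k hk, one_smul]; rfl

variable {B} {K : ℝ}

theorem norm_sum_e_le_of_subset (hK : B.QuasiGreedyWith K) {Γ' Γ : Finset ℕ} (hsub : Γ' ⊆ Γ) :
    ‖∑ k ∈ Γ', B.e k‖ ≤ K * ‖∑ k ∈ Γ, B.e k‖ := by
  obtain ⟨σ, hσ', hσ⟩ := exists_perm_map_range_eq_of_subset hsub
  rw [← B.G_sum_e hsub hσ']
  exact (hK _ σ (B.isGreedyPerm_sum_e hσ) #Γ').1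

lemma one_le_of_quasiGreedyWith (hK : B.QuasiGreedyWith K) : 1 ≤ K := by
  have h := norm_sum_e_le_of_subset hK (subset_refl {0})
  have he : 0 < ‖B.e 0‖ := B.c_norm_pos.trans_le (B.norm_e_ge 0)
  rw [sum_singleton] at h
  nlinarith

variable (B)

/-- `hr k` and `hl k` are the supremum and the infimum of this set. -/
def sumNorms (k : ℕ) : Set ℝ := {r | ∃ Γ : Finset ℕ, #Γ = k ∧ r = ‖∑ j ∈ Γ, B.e j‖}

lemma sumNorms_nonempty (k : ℕ) : (B.sumNorms k).Nonempty :=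
  ⟨_, range k, card_range k, rfl⟩

lemma sumNorms_bddAbove (k : ℕ) : BddAbove (B.sumNorms k) := by
  refine ⟨k * B.C_norm, ?_⟩
  rintro r ⟨Γ, hΓ, rfl⟩
  calc ‖∑ j ∈ Γ, B.e j‖ ≤ ∑ j ∈ Γ, ‖B.e j‖ := norm_sum_le _ _
    _ ≤ ∑ j ∈ Γ, B.C_norm := sum_le_sum fun j _ => B.norm_e_le j
    _ = k * B.C_norm := by rw [sum_const, hΓ, nsmul_eq_mul]

lemma sumNorms_bddBelow (k : ℕ) : BddBelow (B.sumNorms k) :=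
  ⟨0, by rintro r ⟨Γ, -, rfl⟩; exact norm_nonneg _⟩

variable {B}

lemma le_hr {Γ : Finset ℕ} : ‖∑ j ∈ Γ, B.e j‖ ≤ B.hr #Γ :=
  le_csSup (B.sumNorms_bddAbove _) ⟨Γ, rfl, rfl⟩

lemma hl_le {Γ : Finset ℕ} : B.hl #Γ ≤ ‖∑ j ∈ Γ, B.e j‖ :=
  csInf_le (B.sumNorms_bddBelow _) ⟨Γ, rfl, rfl⟩

lemma hr_nonneg (k : ℕ) : 0 ≤ B.hr k := by
  simpa using (norm_nonneg _).trans (le_hr (B := B) (Γ := range k))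

lemma hl_nonneg (k : ℕ) : 0 ≤ B.hl k :=
  Real.sInf_nonneg <| by rintro r ⟨Γ, -, rfl⟩; exact norm_nonneg _

lemma hr_add_le (a b : ℕ) : B.hr (a + b) ≤ B.hr a + B.hr b := by
  refine Real.sSup_le ?_ (add_nonneg (hr_nonneg a) (hr_nonneg b))
  rintro r ⟨Γ, hΓ, rfl⟩
  obtain ⟨Γa, hsub, rfl⟩ := exists_subset_card_eq (show a ≤ #Γ by omega)
  have hb : #(Γ \ Γa) = b := by rw [card_sdiff_of_subset hsub]; omega
  rw [← sum_sdiff hsub, ← hb, add_comm (B.hr _)]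
  exact (norm_add_le _ _).trans (add_le_add le_hr le_hr)

lemma c_norm_le_hl_one : B.c_norm ≤ B.hl 1 :=
  le_csInf (B.sumNorms_nonempty 1) <| by
    rintro r ⟨Γ, hΓ, rfl⟩
    obtain ⟨j, rfl⟩ := card_eq_one.1 hΓ
    rw [sum_singleton]
    exact B.norm_e_ge j

lemma hl_le_mul_hl (hK : B.QuasiGreedyWith K) {a k : ℕ} (hak : a ≤ k) :
    B.hl a ≤ K * B.hl k := by
  have hK0 : 0 < K := one_pos.trans_le (one_le_of_quasiGreedyWith hK)
  rw [← div_le_iff₀' hK0]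
  refine le_csInf (B.sumNorms_nonempty k) ?_
  rintro r ⟨Γ, rfl, rfl⟩
  obtain ⟨Γa, hsub, rfl⟩ := exists_subset_card_eq hak
  rw [div_le_iff₀' hK0]
  exact hl_le.trans (norm_sum_e_le_of_subset hK hsub)

lemma hl_pos (hK : B.QuasiGreedyWith K) {k : ℕ} (hk : 1 ≤ k) : 0 < B.hl k := by
  have h := B.c_norm_pos.trans_le (c_norm_le_hl_one.trans (hl_le_mul_hl hK hk))
  exact pos_of_mul_pos_right h (one_pos.trans_le (one_le_of_quasiGreedyWith hK)).le

variable (B)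

lemma mu_bddAbove (N : ℕ) : BddAbove {r | ∃ k, 1 ≤ k ∧ k ≤ N ∧ r = B.hr k / B.hl k} := by
  refine ((Set.finite_Icc 1 N).image fun k => B.hr k / B.hl k).bddAbove.mono ?_
  rintro r ⟨k, hk1, hkN, rfl⟩
  exact ⟨k, ⟨hk1, hkN⟩, rfl⟩

lemma mu_nonneg (N : ℕ) : 0 ≤ B.mu N :=
  Real.sSup_nonneg <| by
    rintro r ⟨k, -, -, rfl⟩
    exact div_nonneg (hr_nonneg k) (hl_nonneg k)

variable {B}

lemma hr_le_mu_mul_hl (hK : B.QuasiGreedyWith K) {k N : ℕ} (hk : 1 ≤ k) (hkN : k ≤ N) :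
    B.hr k ≤ B.mu N * B.hl k :=
  (div_le_iff₀ (hl_pos hK hk)).1 (le_csSup (B.mu_bddAbove N) ⟨k, hk, hkN, rfl⟩)

theorem mu_two_mul_le (hK : B.QuasiGreedyWith K) (N : ℕ) : B.mu (2 * N) ≤ 2 * K * B.mu N := by
  have hK1 := one_le_of_quasiGreedyWith hK
  have hμ := B.mu_nonneg N
  refine Real.sSup_le ?_ (by positivity)
  rintro r ⟨k, hk1, hk2N, rfl⟩
  rw [div_le_iff₀ (hl_pos hK hk1)]
  have hl := (hl_pos hK hk1).le
  by_cases hkN : k ≤ N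
  · have := hr_le_mu_mul_hl hK hk1 hkN
    nlinarith [mul_nonneg hμ hl]
  · obtain ⟨a, b, rfl, ha1, haN, hb1, hbN⟩ :
        ∃ a b, k = a + b ∧ 1 ≤ a ∧ a ≤ N ∧ 1 ≤ b ∧ b ≤ N :=
      ⟨k / 2, k - k / 2, by omega, by omega, by omega, by omega, by omega⟩
    have hμa := mul_le_mul_of_nonneg_left (hl_le_mul_hl hK (Nat.le_add_right a b)) hμ
    have hμb := mul_le_mul_of_nonneg_left (hl_le_mul_hl hK (Nat.le_add_left b a)) hμ
    calc B.hr (a + b) ≤ B.hr a + B.hr b := hr_add_le a b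
      _ ≤ B.mu N * B.hl a + B.mu N * B.hl b :=
          add_le_add (hr_le_mu_mul_hl hK ha1 haN) (hr_le_mu_mul_hl hK hb1 hbN)
      _ ≤ 2 * K * B.mu N * B.hl (a + b) := by linarith

end QGBasis

theorem stmt6_general {X : Type*} [NormedAddCommGroup X] [NormedSpace ℝ X]
    (B : QGBasis X) (K : ℝ) (hK : B.QuasiGreedyWith K)
    (N : ℕ) :
    B.mu (2 * N) ≤ 2 * K ^ 2 * B.mu N := by
  have hK1 := QGBasis.one_le_of_quasiGreedyWith hK
  calc B.mu (2 * N) ≤ 2 * K * B.mu N := QGBasis.mu_two_mul_le hK N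
    _ ≤ 2 * K ^ 2 * B.mu N := mul_le_mul_of_nonneg_right (by nlinarith) (B.mu_nonneg N)

/-- the democracy ratio of a quasi-greedy basis is doubling:
`μ(2N) ≤ 2K² μ(N)`. -/
theorem stmt6 {X : Type*} [NormedAddCommGroup X] [NormedSpace ℝ X] [CompleteSpace X]
    (B : QGBasis X) (K : ℝ) (hK : B.QuasiGreedyWith K)
    (N : ℕ) (hN : 1 ≤ N) :
    B.mu (2 * N) ≤ 2 * K ^ 2 * B.mu N :=
  stmt6_general B K hK N
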